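/- For the DFAs A' and B constructed from a monotone circuit g_1,…,g_n: if val(n) = 1, then there exists an infinite tower between L(A') and L(B). -/
import Mathlib


/-- The type of a gate in a monotone circuit with `n + 1` gates: a `0`-gate, a
`1`-gate, an `∧`-gate with children `l, r`, or an `∨`-gate with children `l, r`. -/
inductive Gate (n : ℕ) where
  | zero : Gate n
  | one : Gate n
  | and (l r : Fin (n + 1)) : Gate n
  | or (l r : Fin (n + 1)) : Gate n

/-- A monotone circuit with gates `g_0, …, g_n`, where the children of each
`∧`- or `∨`-gate have strictly smaller indices. -/
structure Circuit (n : ℕ) where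
  gate : Fin (n + 1) → Gate n
  and_lt : ∀ i l r, gate i = Gate.and l r → l < i ∧ r < i
  or_lt : ∀ i l r, gate i = Gate.or l r → l < i ∧ r < i

set_option linter.unusedVariables false in
/-- The value of gate `i`: `0`-gates are false, `1`-gates are true, `∧`-gates and
`∨`-gates take the conjunction resp. disjunction of their children's values. -/
def Circuit.val {n : ℕ} (c : Circuit n) (i : Fin (n + 1)) : Bool :=
  match h : c.gate i with
  | Gate.zero => false
  | Gate.one => true
  | Gate.and l r =>
      have hlt := c.and_lt i l r h;
      c.val l && c.val r
  | Gate.or l r =>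
      have hlt := c.or_lt i l r h
      c.val l || c.val r
termination_by (i : ℕ)
decreasing_by
  · exact hlt.1
  · exact hlt.2
  · exact hlt.1
  · exact hlt.2

/-- The alphabet `Σ = {x, y} ∪ {aᵢ, bᵢ : 0 ≤ i ≤ n}`. -/
inductive Alpha (n : ℕ) where
  | x : Alpha n
  | y : Alpha n
  | a (i : Fin (n + 1)) : Alpha n
  | b (i : Fin (n + 1)) : Alpha n
deriving DecidableEq

/-- The states of the DFA `A'`: the initial state `s`, the accepting states
`⊥` (bot) and `⊤` (top), a state for each gate, and a non-accepting sink. -/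
inductive StA (n : ℕ) where
  | s : StA n
  | bot : StA n
  | top : StA n
  | g (i : Fin (n + 1)) : StA n
  | sink : StA n
deriving DecidableEq

/-- The DFA `A'` constructed from the monotone circuit `c`. -/
def dfaA {n : ℕ} (c : Circuit n) : DFA (Alpha n) (StA n) where
  step := fun p ch =>
    match p, ch with
    | StA.s, Alpha.x => StA.g (Fin.last n)
    | StA.top, Alpha.y => StA.s
    | StA.g i, Alpha.a j =>
        if j = i then
          match c.gate i with
          | Gate.zero => StA.bot
          | Gate.one => StA.top
          | Gate.and l _ => StA.g l
          | Gate.or l _ => StA.g l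
        else StA.sink
    | StA.g i, Alpha.b j =>
        if j = i then
          match c.gate i with
          | Gate.zero => StA.bot
          | Gate.one => StA.top
          | Gate.and _ r => StA.g r
          | Gate.or _ r => StA.g r
        else StA.sink
    | _, _ => StA.sink
  start := StA.s
  accept := {StA.bot, StA.top}

/-- The states of the DFA `B`: the initial and accepting state `q`, a state `t`,
a state for each gate (only the `∧`-gate states are used), and a sink. -/
inductive StB (n : ℕ) where
  | q : StB n
  | t : StB n
  | g (i : Fin (n + 1)) : StB n
  | sink : StB n
deriving DecidableEq

/-- The DFA `B` constructed from the monotone circuit `c`. -/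
def dfaB {n : ℕ} (c : Circuit n) : DFA (Alpha n) (StB n) where
  step := fun p ch =>
    match p, ch with
    | StB.q, Alpha.x => StB.t
    | StB.t, Alpha.y => StB.q
    | StB.t, Alpha.a i =>
        match c.gate i with
        | Gate.and _ _ => StB.g i
        | Gate.or _ _ => StB.t
        | Gate.one => StB.t
        | Gate.zero => StB.sink
    | StB.t, Alpha.b i =>
        match c.gate i with
        | Gate.or _ _ => StB.t
        | Gate.one => StB.t
        | _ => StB.sink
    | StB.g i, Alpha.b j =>
        if j = i then
          match c.gate i with
          | Gate.and _ _ => StB.t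
          | _ => StB.sink
        else StB.sink
    | _, _ => StB.sink
  start := StB.q
  accept := {StB.q}

/-- `w` is an infinite tower between the languages `K` and `L`:
`w 0 ∈ K ∪ L`, each word is a subsequence of the next, a word in `K` is followed by a
word in `L`, and a word in `L` is followed by a word in `K`. -/
def IsInfiniteTower {α : Type*} (K L : Set (List α)) (w : ℕ → List α) : Prop :=
  w 0 ∈ K ∪ L ∧ (∀ i, (w i).Sublist (w (i + 1))) ∧
    (∀ i, w i ∈ K → w (i + 1) ∈ L) ∧ (∀ i, w i ∈ L → w (i + 1) ∈ K)

/-- There exists an infinite tower between `K` and `L`. -/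
def HasInfiniteTower {α : Type*} (K L : Set (List α)) : Prop :=
  ∃ w : ℕ → List α, IsInfiniteTower K L w

namespace TowerAux

variable {n : ℕ}

lemma val_zero (c : Circuit n) {i : Fin (n+1)} (h : c.gate i = Gate.zero) :
    c.val i = false := by
  rw [Circuit.val]; split <;> simp_all

lemma val_one (c : Circuit n) {i : Fin (n+1)} (h : c.gate i = Gate.one) :
    c.val i = true := by
  rw [Circuit.val]; split <;> simp_all

lemma val_and (c : Circuit n) {i l r : Fin (n+1)} (h : c.gate i = Gate.and l r) :
    c.val i = (c.val l && c.val r) := by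
  rw [Circuit.val]; split <;> simp_all

lemma val_or (c : Circuit n) {i l r : Fin (n+1)} (h : c.gate i = Gate.or l r) :
    c.val i = (c.val l || c.val r) := by
  rw [Circuit.val]; split <;> simp_all

/-- DFS word of the proof tree rooted at gate `i`. -/
def dfsWord (c : Circuit n) (i : Fin (n + 1)) : List (Alpha n) :=
  match h : c.gate i with
  | Gate.zero => []
  | Gate.one => [Alpha.a i]
  | Gate.and l r =>
      have hlt := c.and_lt i l r h
      Alpha.a i :: Alpha.b i :: (dfsWord c l ++ dfsWord c r)
  | Gate.or l r =>
      have hlt := c.or_lt i l r h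
      if c.val l then Alpha.a i :: dfsWord c l else Alpha.b i :: dfsWord c r
termination_by (i : ℕ)
decreasing_by
  · exact hlt.1
  · exact hlt.2
  · exact hlt.1
  · exact hlt.2

/-- A root-to-leaf path word through true gates, routed towards letter `ch`. -/
def pathW (c : Circuit n) (ch : Alpha n) (i : Fin (n + 1)) : List (Alpha n) :=
  match h : c.gate i with
  | Gate.zero => []
  | Gate.one => [Alpha.a i]
  | Gate.and l r =>
      have hlt := c.and_lt i l r h
      if ch = Alpha.a i then Alpha.a i :: pathW c ch l
      else if ch = Alpha.b i then Alpha.b i :: pathW c ch r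
      else if ch ∈ dfsWord c l then Alpha.a i :: pathW c ch l
      else Alpha.b i :: pathW c ch r
  | Gate.or l r =>
      have hlt := c.or_lt i l r h
      if c.val l then Alpha.a i :: pathW c ch l else Alpha.b i :: pathW c ch r
termination_by (i : ℕ)
decreasing_by
  all_goals first
  | exact hlt.1
  | exact hlt.2

lemma dfsWord_zero (c : Circuit n) {i : Fin (n+1)} (h : c.gate i = Gate.zero) :
    dfsWord c i = [] := by rw [dfsWord]; split <;> simp_all

lemma dfsWord_one (c : Circuit n) {i : Fin (n+1)} (h : c.gate i = Gate.one) :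
    dfsWord c i = [Alpha.a i] := by rw [dfsWord]; split <;> simp_all

lemma dfsWord_and (c : Circuit n) {i l r : Fin (n+1)} (h : c.gate i = Gate.and l r) :
    dfsWord c i = Alpha.a i :: Alpha.b i :: (dfsWord c l ++ dfsWord c r) := by
  rw [dfsWord]; split <;> simp_all

lemma dfsWord_or (c : Circuit n) {i l r : Fin (n+1)} (h : c.gate i = Gate.or l r) :
    dfsWord c i = if c.val l then Alpha.a i :: dfsWord c l else Alpha.b i :: dfsWord c r := by
  rw [dfsWord]; split <;> simp_all

lemma pathW_one (c : Circuit n) {i : Fin (n+1)} (ch : Alpha n) (h : c.gate i = Gate.one) :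
    pathW c ch i = [Alpha.a i] := by rw [pathW]; split <;> simp_all

lemma pathW_and (c : Circuit n) {i l r : Fin (n+1)} (ch : Alpha n)
    (h : c.gate i = Gate.and l r) :
    pathW c ch i =
      if ch = Alpha.a i then Alpha.a i :: pathW c ch l
      else if ch = Alpha.b i then Alpha.b i :: pathW c ch r
      else if ch ∈ dfsWord c l then Alpha.a i :: pathW c ch l
      else Alpha.b i :: pathW c ch r := by
  rw [pathW]; split <;> simp_all

lemma pathW_or (c : Circuit n) {i l r : Fin (n+1)} (ch : Alpha n)
    (h : c.gate i = Gate.or l r) :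
    pathW c ch i = if c.val l then Alpha.a i :: pathW c ch l else Alpha.b i :: pathW c ch r := by
  rw [pathW]; split <;> simp_all

end TowerAux
namespace TowerAux
variable {n : ℕ}

theorem evalB_dfs (c : Circuit n) (i : Fin (n+1)) (hv : c.val i = true) :
    (dfaB c).evalFrom StB.t (dfsWord c i) = StB.t := by
  match h : c.gate i with
  | Gate.zero => rw [val_zero c h] at hv; exact absurd hv (by simp)
  | Gate.one => rw [dfsWord_one c h]; simp [DFA.evalFrom, dfaB, h]
  | Gate.and l r =>
      have hlt := c.and_lt i l r h
      rw [val_and c h, Bool.and_eq_true] at hv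
      rw [dfsWord_and c h]
      have hl := evalB_dfs c l hv.1
      have hr := evalB_dfs c r hv.2
      show (dfaB c).evalFrom StB.t
        ([Alpha.a i, Alpha.b i] ++ (dfsWord c l ++ dfsWord c r)) = StB.t
      rw [DFA.evalFrom_of_append, DFA.evalFrom_of_append]
      have h1 : (dfaB c).evalFrom StB.t [Alpha.a i, Alpha.b i] = StB.t := by
        simp [DFA.evalFrom, dfaB, h]
      rw [h1, hl, hr]
  | Gate.or l r =>
      have hlt := c.or_lt i l r h
      rw [val_or c h, Bool.or_eq_true] at hv
      rw [dfsWord_or c h]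
      by_cases hvl : c.val l = true
      · have hl := evalB_dfs c l hvl
        simp only [hvl, if_true]
        show (dfaB c).evalFrom StB.t ([Alpha.a i] ++ dfsWord c l) = StB.t
        rw [DFA.evalFrom_of_append]
        have h1 : (dfaB c).evalFrom StB.t [Alpha.a i] = StB.t := by
          simp [DFA.evalFrom, dfaB, h]
        rw [h1, hl]
      · have hvr : c.val r = true := by tauto
        have hr := evalB_dfs c r hvr
        simp only [hvl, if_false]
        show (dfaB c).evalFrom StB.t ([Alpha.b i] ++ dfsWord c r) = StB.t
        rw [DFA.evalFrom_of_append]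
        have h1 : (dfaB c).evalFrom StB.t [Alpha.b i] = StB.t := by
          simp [DFA.evalFrom, dfaB, h]
        rw [h1, hr]
termination_by (i : ℕ)
decreasing_by
  all_goals first | exact hlt.1 | exact hlt.2

end TowerAux
namespace TowerAux
variable {n : ℕ}

theorem evalA_path (c : Circuit n) (ch : Alpha n) (i : Fin (n+1)) (hv : c.val i = true) :
    (dfaA c).evalFrom (StA.g i) (pathW c ch i) = StA.top := by
  match h : c.gate i with
  | Gate.zero => rw [val_zero c h] at hv; exact absurd hv (by simp)
  | Gate.one => rw [pathW_one c ch h]; simp [DFA.evalFrom, dfaA, h]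
  | Gate.and l r =>
      have hlt := c.and_lt i l r h
      rw [val_and c h, Bool.and_eq_true] at hv
      rw [pathW_and c ch h]
      have hstepa : (dfaA c).step (StA.g i) (Alpha.a i) = StA.g l := by simp [dfaA, h]
      have hstepb : (dfaA c).step (StA.g i) (Alpha.b i) = StA.g r := by simp [dfaA, h]
      split
      · show (dfaA c).evalFrom ((dfaA c).step (StA.g i) (Alpha.a i)) (pathW c ch l) = _
        rw [hstepa]; exact evalA_path c ch l hv.1
      split
      · show (dfaA c).evalFrom ((dfaA c).step (StA.g i) (Alpha.b i)) (pathW c ch r) = _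
        rw [hstepb]; exact evalA_path c ch r hv.2
      split
      · show (dfaA c).evalFrom ((dfaA c).step (StA.g i) (Alpha.a i)) (pathW c ch l) = _
        rw [hstepa]; exact evalA_path c ch l hv.1
      · show (dfaA c).evalFrom ((dfaA c).step (StA.g i) (Alpha.b i)) (pathW c ch r) = _
        rw [hstepb]; exact evalA_path c ch r hv.2
  | Gate.or l r =>
      have hlt := c.or_lt i l r h
      rw [val_or c h, Bool.or_eq_true] at hv
      rw [pathW_or c ch h]
      have hstepa : (dfaA c).step (StA.g i) (Alpha.a i) = StA.g l := by simp [dfaA, h]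
      have hstepb : (dfaA c).step (StA.g i) (Alpha.b i) = StA.g r := by simp [dfaA, h]
      by_cases hvl : c.val l = true
      · simp only [hvl, if_true]
        show (dfaA c).evalFrom ((dfaA c).step (StA.g i) (Alpha.a i)) (pathW c ch l) = _
        rw [hstepa]; exact evalA_path c ch l hvl
      · have hvr : c.val r = true := by tauto
        simp only [hvl, if_false]
        show (dfaA c).evalFrom ((dfaA c).step (StA.g i) (Alpha.b i)) (pathW c ch r) = _
        rw [hstepb]; exact evalA_path c ch r hvr
termination_by (i : ℕ)
decreasing_by all_goals first | exact hlt.1 | exact hlt.2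

theorem mem_pathW (c : Circuit n) (ch : Alpha n) (i : Fin (n+1))
    (hch : ch ∈ dfsWord c i) : ch ∈ pathW c ch i := by
  match h : c.gate i with
  | Gate.zero => rw [dfsWord_zero c h] at hch; simp at hch
  | Gate.one => rw [dfsWord_one c h] at hch; rw [pathW_one c ch h]; exact hch
  | Gate.and l r =>
      have hlt := c.and_lt i l r h
      rw [dfsWord_and c h] at hch
      rw [pathW_and c ch h]
      by_cases h1 : ch = Alpha.a i
      · simp [h1]
      by_cases h2 : ch = Alpha.b i
      · simp [h1, h2]
      simp only [h1, h2, if_false]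
      have hmem : ch ∈ dfsWord c l ∨ ch ∈ dfsWord c r := by
        simp only [List.mem_cons, List.mem_append] at hch; tauto
      by_cases h3 : ch ∈ dfsWord c l
      · simp only [h3, if_true, List.mem_cons]
        exact Or.inr (mem_pathW c ch l h3)
      · have h4 : ch ∈ dfsWord c r := by tauto
        simp only [h3, if_false, List.mem_cons]
        exact Or.inr (mem_pathW c ch r h4)
  | Gate.or l r =>
      have hlt := c.or_lt i l r h
      rw [dfsWord_or c h] at hch
      rw [pathW_or c ch h]
      by_cases hvl : c.val l = true
      · simp only [hvl, if_true] at hch ⊢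
        rcases List.mem_cons.1 hch with h1 | h1
        · simp [h1]
        · exact List.mem_cons.2 (Or.inr (mem_pathW c ch l h1))
      · simp only [hvl, if_false] at hch ⊢
        rcases List.mem_cons.1 hch with h1 | h1
        · simp [h1]
        · exact List.mem_cons.2 (Or.inr (mem_pathW c ch r h1))
termination_by (i : ℕ)
decreasing_by all_goals first | exact hlt.1 | exact hlt.2

theorem pathW_subset (c : Circuit n) (ch ch' : Alpha n) (i : Fin (n+1))
    (hch : ch' ∈ pathW c ch i) : ch' ∈ dfsWord c i := by
  match h : c.gate i with
  | Gate.zero => rw [pathW] at hch; split at hch <;> simp_all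
  | Gate.one => rw [pathW_one c ch h] at hch; rw [dfsWord_one c h]; exact hch
  | Gate.and l r =>
      have hlt := c.and_lt i l r h
      rw [pathW_and c ch h] at hch
      rw [dfsWord_and c h]
      simp only [List.mem_cons, List.mem_append]
      split at hch
      · rcases List.mem_cons.1 hch with h1 | h1
        · tauto
        · exact Or.inr (Or.inr (Or.inl (pathW_subset c ch ch' l h1)))
      split at hch
      · rcases List.mem_cons.1 hch with h1 | h1
        · tauto
        · exact Or.inr (Or.inr (Or.inr (pathW_subset c ch ch' r h1)))
      split at hch
      · rcases List.mem_cons.1 hch with h1 | h1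
        · tauto
        · exact Or.inr (Or.inr (Or.inl (pathW_subset c ch ch' l h1)))
      · rcases List.mem_cons.1 hch with h1 | h1
        · tauto
        · exact Or.inr (Or.inr (Or.inr (pathW_subset c ch ch' r h1)))
  | Gate.or l r =>
      have hlt := c.or_lt i l r h
      rw [pathW_or c ch h] at hch
      rw [dfsWord_or c h]
      by_cases hvl : c.val l = true
      · simp only [hvl, if_true] at hch ⊢
        rcases List.mem_cons.1 hch with h1 | h1
        · simp [h1]
        · exact List.mem_cons.2 (Or.inr (pathW_subset c ch ch' l h1))
      · simp only [hvl, if_false] at hch ⊢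
        rcases List.mem_cons.1 hch with h1 | h1
        · simp [h1]
        · exact List.mem_cons.2 (Or.inr (pathW_subset c ch ch' r h1))
termination_by (i : ℕ)
decreasing_by all_goals first | exact hlt.1 | exact hlt.2

end TowerAux
namespace TowerAux
variable {n : ℕ}

def blockB (c : Circuit n) : List (Alpha n) :=
  Alpha.x :: (dfsWord c (Fin.last n) ++ [Alpha.y])

def blockA (c : Circuit n) (ch : Alpha n) : List (Alpha n) :=
  Alpha.x :: (pathW c ch (Fin.last n) ++ [Alpha.y])

def tailA (c : Circuit n) : List (Alpha n) :=
  Alpha.x :: pathW c Alpha.x (Fin.last n)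

def coverB (c : Circuit n) (u : List (Alpha n)) : List (Alpha n) :=
  (u.map fun _ => blockB c).flatten

def coverA (c : Circuit n) (u : List (Alpha n)) : List (Alpha n) :=
  (u.map (blockA c)).flatten ++ tailA c

lemma sub_join_map {α : Type*} (u : List α) (f : α → List α)
    (hf : ∀ ch ∈ u, ch ∈ f ch) : u.Sublist (u.map f).flatten := by
  induction u with
  | nil => simp
  | cons a u ih =>
      simp only [List.map_cons, List.flatten_cons]
      exact List.Sublist.append (List.singleton_sublist.2 (hf a (by simp)))
        (ih fun ch hch => hf ch (by simp [hch]))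

variable (c : Circuit n) (h : c.val (Fin.last n) = true)

include h in
lemma evalB_block : (dfaB c).evalFrom StB.q (blockB c) = StB.q := by
  show (dfaB c).evalFrom StB.q ([Alpha.x] ++ dfsWord c (Fin.last n) ++ [Alpha.y]) = StB.q
  rw [DFA.evalFrom_of_append, DFA.evalFrom_of_append]
  have h1 : (dfaB c).evalFrom StB.q [Alpha.x] = StB.t := by simp [DFA.evalFrom, dfaB]
  rw [h1, evalB_dfs c _ h]
  simp [DFA.evalFrom, dfaB]

include h in
lemma accept_coverB (u : List (Alpha n)) : coverB c u ∈ (dfaB c).accepts := by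
  rw [DFA.mem_accepts]
  have : ∀ u : List (Alpha n), (dfaB c).evalFrom StB.q (coverB c u) = StB.q := by
    intro u
    induction u with
    | nil => simp [coverB, DFA.evalFrom]
    | cons a u ih =>
        show (dfaB c).evalFrom StB.q (blockB c ++ coverB c u) = StB.q
        rw [DFA.evalFrom_of_append, evalB_block c h, ih]
  show (dfaB c).evalFrom StB.q (coverB c u) ∈ _
  rw [this u]; simp [dfaB]

include h in
lemma evalA_block (ch : Alpha n) : (dfaA c).evalFrom StA.s (blockA c ch) = StA.s := by
  show (dfaA c).evalFrom StA.s ([Alpha.x] ++ pathW c ch (Fin.last n) ++ [Alpha.y]) = StA.s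
  rw [DFA.evalFrom_of_append, DFA.evalFrom_of_append]
  have h1 : (dfaA c).evalFrom StA.s [Alpha.x] = StA.g (Fin.last n) := by
    simp [DFA.evalFrom, dfaA]
  rw [h1, evalA_path c ch _ h]
  simp [DFA.evalFrom, dfaA]

include h in
lemma evalA_tail : (dfaA c).evalFrom StA.s (tailA c) = StA.top := by
  show (dfaA c).evalFrom StA.s ([Alpha.x] ++ pathW c Alpha.x (Fin.last n)) = StA.top
  rw [DFA.evalFrom_of_append]
  have h1 : (dfaA c).evalFrom StA.s [Alpha.x] = StA.g (Fin.last n) := by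
    simp [DFA.evalFrom, dfaA]
  rw [h1, evalA_path c _ _ h]

include h in
lemma accept_tailA : tailA c ∈ (dfaA c).accepts := by
  rw [DFA.mem_accepts]
  show (dfaA c).evalFrom StA.s (tailA c) ∈ _
  rw [evalA_tail c h]; simp [dfaA]

include h in
lemma accept_coverA (u : List (Alpha n)) : coverA c u ∈ (dfaA c).accepts := by
  rw [DFA.mem_accepts]
  have hj : ∀ u : List (Alpha n), (dfaA c).evalFrom StA.s ((u.map (blockA c)).flatten) = StA.s := by
    intro u
    induction u with
    | nil => simp [DFA.evalFrom]
    | cons a u ih =>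
        simp only [List.map_cons, List.flatten_cons]
        rw [DFA.evalFrom_of_append, evalA_block c h, ih]
  show (dfaA c).evalFrom StA.s (coverA c u) ∈ _
  rw [coverA, DFA.evalFrom_of_append, hj, evalA_tail c h]
  simp [dfaA]

-- letter lemmas
lemma mem_blockB_of_blockA {ch ch' : Alpha n} (hm : ch' ∈ blockA c ch) : ch' ∈ blockB c := by
  simp only [blockA, blockB, List.mem_cons, List.mem_append, List.mem_singleton] at hm ⊢
  rcases hm with h1 | h1 | h1
  · tauto
  · exact Or.inr (Or.inl (pathW_subset c ch ch' _ h1))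
  · tauto

lemma mem_blockB_of_tailA {ch' : Alpha n} (hm : ch' ∈ tailA c) : ch' ∈ blockB c := by
  simp only [tailA, blockB, List.mem_cons, List.mem_append, List.mem_singleton] at hm ⊢
  rcases hm with h1 | h1
  · tauto
  · exact Or.inr (Or.inl (pathW_subset c _ ch' _ h1))

lemma mem_blockA_self {ch : Alpha n} (hm : ch ∈ blockB c) : ch ∈ blockA c ch := by
  simp only [blockA, blockB, List.mem_cons, List.mem_append, List.mem_singleton] at hm ⊢
  rcases hm with h1 | h1 | h1
  · tauto
  · exact Or.inr (Or.inl (mem_pathW c ch _ h1))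
  · tauto

lemma mem_blockB_of_coverB {ch' : Alpha n} {u : List (Alpha n)}
    (hm : ch' ∈ coverB c u) : ch' ∈ blockB c := by
  simp only [coverB, List.mem_flatten] at hm
  obtain ⟨l, hl, hmem⟩ := hm
  simp only [List.mem_map] at hl
  obtain ⟨a, _, rfl⟩ := hl
  exact hmem

lemma mem_blockB_of_coverA {ch' : Alpha n} {u : List (Alpha n)}
    (hm : ch' ∈ coverA c u) : ch' ∈ blockB c := by
  simp only [coverA, List.mem_append, List.mem_flatten] at hm
  rcases hm with ⟨l, hl, hmem⟩ | hm
  · simp only [List.mem_map] at hl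
    obtain ⟨a, _, rfl⟩ := hl
    exact mem_blockB_of_blockA c hmem
  · exact mem_blockB_of_tailA c hm

lemma sub_coverB {u : List (Alpha n)} (hu : ∀ ch ∈ u, ch ∈ blockB c) :
    u.Sublist (coverB c u) :=
  sub_join_map u _ fun ch hch => hu ch hch

lemma sub_coverA {u : List (Alpha n)} (hu : ∀ ch ∈ u, ch ∈ blockB c) :
    u.Sublist (coverA c u) :=
  (sub_join_map u (blockA c) fun ch hch => mem_blockA_self c (hu ch hch)).trans
    (List.sublist_append_left _ _)

end TowerAux
namespace TowerAux
variable {n : ℕ}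

lemma stepB_eq_q (c : Circuit n) (p : StB n) (ch : Alpha n)
    (hs : (dfaB c).step p ch = StB.q) : ch = Alpha.y := by
  cases p <;> cases ch <;>
    simp only [dfaB] at hs <;>
    first
    | rfl
    | exact absurd hs (by simp)
    | (split at hs <;> (try split at hs) <;> simp_all)

lemma stepA_y (c : Circuit n) (p : StA n) :
    (dfaA c).step p Alpha.y ∉ (dfaA c).accept := by
  cases p <;> simp [dfaA]

lemma disjointAB (c : Circuit n) (w : List (Alpha n))
    (hA : w ∈ (dfaA c).accepts) : w ∉ (dfaB c).accepts := by
  intro hB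
  induction w using List.reverseRecOn with
  | nil =>
      rw [DFA.mem_accepts] at hA
      simp [DFA.eval, DFA.evalFrom, dfaA] at hA
  | append_singleton w' ch _ =>
      rw [DFA.mem_accepts, DFA.eval, DFA.evalFrom_append_singleton] at hA hB
      have hy : ch = Alpha.y := by
        apply stepB_eq_q c _ ch
        simpa [dfaB] using hB
      rw [hy] at hA
      exact stepA_y c _ hA

def tower (c : Circuit n) : ℕ → List (Alpha n)
  | 0 => tailA c
  | (k+1) => if k % 2 = 0 then coverB c (tower c k) else coverA c (tower c k)

variable (c : Circuit n) (h : c.val (Fin.last n) = true)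

include h in
lemma tower_spec (k : ℕ) :
    (∀ ch ∈ tower c k, ch ∈ blockB c) ∧
      (k % 2 = 0 → tower c k ∈ (dfaA c).accepts) ∧
      (k % 2 = 1 → tower c k ∈ (dfaB c).accepts) := by
  induction k with
  | zero =>
      refine ⟨fun ch hch => mem_blockB_of_tailA c hch, fun _ => accept_tailA c h, fun h0 => ?_⟩
      omega
  | succ k ih =>
      by_cases hk : k % 2 = 0
      · have hk1 : (k+1) % 2 = 1 := by omega
        simp only [tower, hk, if_true]
        exact ⟨fun ch hch => mem_blockB_of_coverB c hch,
          fun h0 => by omega, fun _ => accept_coverB c h _⟩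
      · have hk0 : (k+1) % 2 = 0 := by omega
        simp only [tower, hk, if_false]
        exact ⟨fun ch hch => mem_blockB_of_coverA c hch,
          fun _ => accept_coverA c h _, fun h1 => by omega⟩

end TowerAux

open TowerAux in
/-- If the output gate of the monotone circuit evaluates to `1`, then there is an
infinite tower between `L(A')` and `L(B)`. -/
theorem stmt11 {n : ℕ} (c : Circuit n) (h : c.val (Fin.last n) = true) :
    HasInfiniteTower {w : List (Alpha n) | w ∈ (dfaA c).accepts}
      {w : List (Alpha n) | w ∈ (dfaB c).accepts} := by
  refine ⟨tower c, Or.inl ?_, ?_, ?_, ?_⟩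
  · exact (tower_spec c h 0).2.1 rfl
  · intro i
    have hlet := (tower_spec c h i).1
    show (tower c i).Sublist (tower c (i+1))
    by_cases hi : i % 2 = 0
    · simp only [tower, hi, if_true]
      exact sub_coverB c hlet
    · simp only [tower, hi, if_false]
      exact sub_coverA c hlet
  · intro i hK
    by_cases hi : i % 2 = 0
    · show tower c (i+1) ∈ _
      simp only [tower, hi, if_true, Set.mem_setOf_eq]
      exact accept_coverB c h _
    · exact absurd ((tower_spec c h i).2.2 (by omega)) (disjointAB c _ hK)
  · intro i hL
    by_cases hi : i % 2 = 0
    · exact absurd hL (disjointAB c _ ((tower_spec c h i).2.1 hi))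
    · show tower c (i+1) ∈ _
      simp only [tower, hi, if_false, Set.mem_setOf_eq]
      exact accept_coverA c h _
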